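/- Let γ be the standard Gaussian measure on X = Fin T → Fin N → EuclideanSpace ℝ (Fin 3) (the finite product over all frames, nodes, and coordinates of gaussianReal 0 1), and for m ∈ X let N(m) := Measure.map (fun z => fun τ i => m τ i + z τ i) γ denote the isotropic Gaussian with mean m and identity covariance. Let C = Fin Tc → Fin N → EuclideanSpace ℝ (Fin 3) and let r : C → X be SE(3)-equivariant: r (g • c) = g • r c for every rigid motion g and every c. Then the conditional prior family c ↦ N(r c) is SE(3)-equivariant: for every rigid motion g and every c, Measure.map (g • ·) (N (r c)) = N (r (g • c)). -/

import Mathlib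

open MeasureTheory ProbabilityTheory

/-- The action of a rigid motion `(R, t)`: `(g • x) τ i = R.mulVec (x τ i) + t`. -/
noncomputable def rigidAct {T N : ℕ} (R : Matrix (Fin 3) (Fin 3) ℝ)
    (t : EuclideanSpace ℝ (Fin 3))
    (x : Fin T → Fin N → EuclideanSpace ℝ (Fin 3)) :
    Fin T → Fin N → EuclideanSpace ℝ (Fin 3) :=
  fun τ i => (EuclideanSpace.equiv (Fin 3) ℝ).symm (R.mulVec (x τ i)) + t

/-- The standard Gaussian measure on `EuclideanSpace ℝ (Fin 3)`: the product over the
three coordinates of the real standard Gaussian `gaussianReal 0 1`. -/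
noncomputable def stdGaussianE3 : Measure (EuclideanSpace ℝ (Fin 3)) :=
  Measure.map (MeasurableEquiv.toLp 2 (Fin 3 → ℝ))
    (Measure.pi fun _ : Fin 3 => gaussianReal 0 1)

/-- The standard Gaussian measure on the trajectory space
`X = Fin T → Fin N → EuclideanSpace ℝ (Fin 3)`. -/
noncomputable def stdGaussianTraj (T N : ℕ) :
    Measure (Fin T → Fin N → EuclideanSpace ℝ (Fin 3)) :=
  Measure.pi fun _ : Fin T => Measure.pi fun _ : Fin N => stdGaussianE3

/-- The isotropic Gaussian on the trajectory space with mean `m` and identity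
covariance: the standard Gaussian translated by `m`. -/
noncomputable def isoGaussian {T N : ℕ}
    (m : Fin T → Fin N → EuclideanSpace ℝ (Fin 3)) :
    Measure (Fin T → Fin N → EuclideanSpace ℝ (Fin 3)) :=
  Measure.map (fun z => fun τ i => m τ i + z τ i) (stdGaussianTraj T N)

/-!
A rigid motion is `g x = L x + t` with `L` the rotation applied to every point, so
`g (m + z) = g m + L z` and the image of `𝒩(m) = (m + ·)_* γ` under `g` is `(g m + ·)_* (L_* γ)`.
The standard Gaussian on `ℝ³` is invariant under orthogonal maps, hence so is the product `γ`:
`L_* γ = γ`. Equivariance of the mean turns `g (r c)` into `r (g c)`.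
-/

open Matrix

noncomputable def Matrix.toEuclideanIsometry {n : Type*} [Fintype n] [DecidableEq n]
    {R : Matrix n n ℝ} (hR : R ∈ orthogonalGroup n ℝ) :
    EuclideanSpace ℝ n ≃ₗᵢ[ℝ] EuclideanSpace ℝ n :=
  Unitary.linearIsometryEquiv ⟨toEuclideanCLM (𝕜 := ℝ) R, Unitary.map_mem _ hR⟩

theorem Matrix.toEuclideanIsometry_apply {n : Type*} [Fintype n] [DecidableEq n]
    {R : Matrix n n ℝ} (hR : R ∈ orthogonalGroup n ℝ) (x : EuclideanSpace ℝ n) :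
    toEuclideanIsometry hR x = (EuclideanSpace.equiv n ℝ).symm (R *ᵥ x) :=
  rfl

theorem MeasureTheory.Measure.map_pi_eq_pi {ι : Type*} [Fintype ι] {X : ι → Type*}
    [∀ i, MeasurableSpace (X i)] {μ : ∀ i, Measure (X i)} [∀ i, SigmaFinite (μ i)]
    {f : ∀ i, X i → X i} (hf : ∀ i, AEMeasurable (f i) (μ i))
    (hμ : ∀ i, (μ i).map (f i) = μ i) :
    (Measure.pi μ).map (fun x i => f i (x i)) = Measure.pi μ := by
  have : ∀ i, SigmaFinite ((μ i).map (f i)) := fun i => by rw [hμ i]; infer_instance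
  rw [Measure.pi_map_pi hf]
  simp_rw [hμ]

theorem MeasureTheory.Measure.map_map_add_left_of_affine {X : Type*} [Add X] [MeasurableSpace X]
    [MeasurableAdd X] {γ : Measure X} {A L : X → X} (hA : Measurable A) (hL : Measurable L)
    (hγ : γ.map L = γ) {m : X} (hAm : ∀ z, A (m + z) = A m + L z) :
    (γ.map (m + ·)).map A = γ.map (A m + ·) := by
  have hcomp : A ∘ (m + ·) = (A m + ·) ∘ L := funext hAm
  rw [Measure.map_map hA (measurable_const_add m), hcomp,
    ← Measure.map_map (measurable_const_add _) hL, hγ]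

theorem stdGaussianE3_eq_stdGaussian : stdGaussianE3 = stdGaussian (EuclideanSpace ℝ (Fin 3)) :=
  map_pi_eq_stdGaussian

instance : IsProbabilityMeasure stdGaussianE3 :=
  stdGaussianE3_eq_stdGaussian ▸ inferInstance

section RigidMotion

variable {T N : ℕ}

theorem rigidAct_add (R : Matrix (Fin 3) (Fin 3) ℝ) (t : EuclideanSpace ℝ (Fin 3))
    (x z : Fin T → Fin N → EuclideanSpace ℝ (Fin 3)) :
    rigidAct R t (x + z) = rigidAct R t x + rigidAct R 0 z := by
  funext τ i
  simp only [rigidAct, Pi.add_apply, WithLp.ofLp_add, mulVec_add, map_add, add_zero]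
  abel

theorem measurable_rigidAct (R : Matrix (Fin 3) (Fin 3) ℝ) (t : EuclideanSpace ℝ (Fin 3)) :
    Measurable (rigidAct (T := T) (N := N) R t) := by
  unfold rigidAct
  fun_prop

theorem rigidAct_zero_eq {R : Matrix (Fin 3) (Fin 3) ℝ} (hR : R ∈ orthogonalGroup (Fin 3) ℝ) :
    rigidAct (T := T) (N := N) R 0 = fun z τ i => toEuclideanIsometry hR (z τ i) := by
  funext z τ i
  simp [rigidAct, toEuclideanIsometry_apply]

theorem map_stdGaussianTraj_rigidAct_zero {R : Matrix (Fin 3) (Fin 3) ℝ}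
    (hR : R ∈ orthogonalGroup (Fin 3) ℝ) :
    (stdGaussianTraj T N).map (rigidAct R 0) = stdGaussianTraj T N := by
  have hE3 : stdGaussianE3.map (toEuclideanIsometry hR) = stdGaussianE3 := by
    rw [stdGaussianE3_eq_stdGaussian, stdGaussian_map]
  have hmeas := (toEuclideanIsometry hR).continuous.measurable
  rw [rigidAct_zero_eq hR, stdGaussianTraj]
  exact Measure.map_pi_eq_pi (fun _ => (measurable_pi_lambda _ fun i =>
    hmeas.comp (measurable_pi_apply i)).aemeasurable)
    fun _ => Measure.map_pi_eq_pi (fun _ => hmeas.aemeasurable) fun _ => hE3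

end RigidMotion

theorem stmt11 (T Tc N : ℕ)
    (r : (Fin Tc → Fin N → EuclideanSpace ℝ (Fin 3)) →
      (Fin T → Fin N → EuclideanSpace ℝ (Fin 3)))
    (hr : ∀ R ∈ Matrix.specialOrthogonalGroup (Fin 3) ℝ,
      ∀ t : EuclideanSpace ℝ (Fin 3), ∀ c,
        r (rigidAct R t c) = rigidAct R t (r c)) :
    ∀ R ∈ Matrix.specialOrthogonalGroup (Fin 3) ℝ,
      ∀ t : EuclideanSpace ℝ (Fin 3), ∀ c,
        Measure.map (rigidAct R t) (isoGaussian (r c))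
          = isoGaussian (r (rigidAct R t c)) := by
  intro R hR t c
  rw [hr R hR t c]
  exact Measure.map_map_add_left_of_affine (measurable_rigidAct R t) (measurable_rigidAct R 0)
    (map_stdGaussianTraj_rigidAct_zero (mem_specialOrthogonalGroup_iff.mp hR).1)
    (rigidAct_add R t (r c))
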